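/- Let (F_n) be a linear-like semiring family of graphs and let G and H be finite simple graphs. Then the fractional F-number is multiplicative both on lexicographic products and on disjunctive products: η_F^frac(G ⋉ H) = η_F^frac(G) · η_F^frac(H) and η_F^frac(G * H) = η_F^frac(G) · η_F^frac(H). -/

import Mathlib

open SimpleGraph

universe u v

/-- The join `G + H` of two simple graphs. -/
def graphJoin {α : Type u} {β : Type v} (G : SimpleGraph α) (H : SimpleGraph β) :
    SimpleGraph (α ⊕ β) where
  Adj x y :=
    match x, y with
    | Sum.inl a, Sum.inl a' => G.Adj a a'
    | Sum.inr b, Sum.inr b' => H.Adj b b'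
    | Sum.inl _, Sum.inr _ => True
    | Sum.inr _, Sum.inl _ => True
  symm := by
    refine ⟨?_⟩
    rintro (a | b) (a' | b') h
    · exact G.adj_symm h
    · trivial
    · trivial
    · exact H.adj_symm h
  loopless := by
    refine ⟨?_⟩
    rintro (a | b) h
    · exact G.irrefl h
    · exact H.irrefl h

/-- The disjunctive product `G * H`. -/
def disjProd {α : Type u} {β : Type v} (G : SimpleGraph α) (H : SimpleGraph β) :
    SimpleGraph (α × β) where
  Adj p q := G.Adj p.1 q.1 ∨ H.Adj p.2 q.2
  symm := ⟨fun p q h => h.imp (fun h' => G.adj_symm h') (fun h' => H.adj_symm h')⟩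
  loopless := ⟨fun p h => h.elim (fun h' => G.irrefl h') (fun h' => H.irrefl h')⟩

/-- The lexicographic product `G ⋉ H`. -/
def lexProd {α : Type u} {β : Type v} (G : SimpleGraph α) (H : SimpleGraph β) :
    SimpleGraph (α × β) where
  Adj p q := G.Adj p.1 q.1 ∨ (p.1 = q.1 ∧ H.Adj p.2 q.2)
  symm := ⟨fun p q h => h.imp (fun h' => G.adj_symm h') (fun h' => ⟨h'.1.symm, H.adj_symm h'.2⟩)⟩
  loopless := ⟨fun p h => h.elim (fun h' => G.irrefl h') (fun h' => H.irrefl h'.2)⟩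

/-- The `d`-fold blowup `G ⋉ d`, i.e. the lexicographic product `G ⋉ K_d`. -/
def blowup {α : Type u} (G : SimpleGraph α) (d : ℕ) : SimpleGraph (α × Fin d) :=
  lexProd G (⊤ : SimpleGraph (Fin d))

/-- The `d`-fractionalization `G/d`: the graph of `d`-cliques of `G`, with two
`d`-cliques adjacent iff they are disjoint and pairwise adjacent. -/
def fracGraph {α : Type u} (G : SimpleGraph α) (d : ℕ) :
    SimpleGraph {S : Finset α // S.card = d ∧ G.IsClique (S : Set α)} where
  Adj S T := S ≠ T ∧ Disjoint S.val T.val ∧ ∀ a ∈ S.val, ∀ b ∈ T.val, G.Adj a b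
  symm := by
    refine ⟨?_⟩
    rintro S T ⟨hne, hd, hadj⟩
    exact ⟨hne.symm, hd.symm, fun b hb a ha => (hadj a ha b hb).symm⟩
  loopless := ⟨fun S h => h.1 rfl⟩

/-- The `n`-fold disjunctive power `G^{*n}`. -/
def disjPow {α : Type u} (G : SimpleGraph α) (n : ℕ) :
    SimpleGraph (Fin n → α) where
  Adj f g := ∃ i, G.Adj (f i) (g i)
  symm := ⟨fun f g ⟨i, h⟩ => ⟨i, h.symm⟩⟩
  loopless := ⟨fun f ⟨i, h⟩ => G.irrefl h⟩

/-- A semiring family of graphs. -/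
structure SemiringFamily where
  V : ℕ → Type u
  F : ∀ n, SimpleGraph (V n)
  isEmpty_zero : IsEmpty (V 0)
  nonempty_one : Nonempty (V 1)
  add_hom : ∀ n m : ℕ, Nonempty (graphJoin (F n) (F m) →g F (n + m))
  mul_hom : ∀ n m : ℕ, Nonempty (disjProd (F n) (F m) →g F (n * m))

/-- The `F`-number: the least `n` such that `G → F_n`. -/
noncomputable def etaF (F : SemiringFamily.{u}) {α : Type v} (G : SimpleGraph α) : ℕ :=
  sInf {n : ℕ | Nonempty (G →g F.F n)}

/-- The fractional `F`-number. -/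
noncomputable def etaFrac (F : SemiringFamily.{u}) {α : Type v} (G : SimpleGraph α) : ℝ :=
  sInf {x : ℝ | ∃ n d : ℕ, 1 ≤ d ∧ Nonempty (G →g fracGraph (F.F n) d) ∧ x = (n : ℝ) / d}

/-- The asymptotic `F`-number. -/
noncomputable def etaAsymp (F : SemiringFamily.{u}) {α : Type v} (G : SimpleGraph α) : ℝ :=
  sInf {x : ℝ | ∃ n : ℕ, 1 ≤ n ∧ x = (etaF F (disjPow G n) : ℝ) ^ ((1 : ℝ) / n)}

/-- The orthogonal complement of a set of vertices. -/
def perp {α : Type u} (G : SimpleGraph α) (S : Set α) : Set α :=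
  {v | ∀ s ∈ S, G.Adj v s}

/-- A flat is a set of vertices with `S^{⊥⊥} = S`. -/
def IsFlat {α : Type u} (G : SimpleGraph α) (S : Set α) : Prop :=
  perp G (perp G S) = S

/-- Homomorphic equivalence of two graphs. -/
def HomEquiv {α : Type u} {β : Type v} (G : SimpleGraph α) (H : SimpleGraph β) : Prop :=
  Nonempty (G →g H) ∧ Nonempty (H →g G)

/-- A linear-like semiring family: every flat of `F_n` induces a subgraph with some
clique number `k`, homomorphically equivalent to `F_k`. -/
structure LinearLikeFamily extends SemiringFamily where
  linearLike : ∀ n (S : Set (V n)), IsFlat (F n) S →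
    ∃ k : ℕ, (∃ s : Finset S, ((F n).induce S).IsNClique k s) ∧
      (∀ s : Finset S, ¬ ((F n).induce S).IsNClique (k + 1) s) ∧
      HomEquiv ((F n).induce S) (F k)

/-!
A homomorphism `G ⋉ H → G * H` gives `η(G ⋉ H) ≤ η(G * H)`, and fractional homomorphisms
`G → F_n/d`, `H → F_m/e` multiply, through `F_n * F_m → F_{nm}`, to `G * H → F_{nm}/(de)`, so
`η(G * H) ≤ η(G) η(H)`. For the converse take `φ : G ⋉ H → F_n/d`. For each vertex `g` of `G`
let `S_g` be the flat spanned by the cliques `φ(g, h)`; flats over adjacent vertices are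
orthogonal. If `S_g` has clique number `k_g` and `m = k_{g₀}` is the least of these, then
`H → F_n/d` restricts to `H → (F_n|S_{g₀})/d → F_m/d`, while choosing an `m`-clique in every
`S_g` gives `G → F_n/m`. Hence `η(G) η(H) ≤ (n/m)(m/d) = n/d`.
-/

lemma Real.sInf_le_sInf_mul_sInf {A B C : Set ℝ} (hA : A.Nonempty) (hB : B.Nonempty)
    (hA0 : ∀ x ∈ A, 0 ≤ x) (hB0 : ∀ y ∈ B, 0 ≤ y) (hC : BddBelow C)
    (h : ∀ x ∈ A, ∀ y ∈ B, x * y ∈ C) : sInf C ≤ sInf A * sInf B := by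
  have hAy : ∀ y ∈ B, sInf C ≤ sInf A * y := fun y hy => by
    rw [mul_comm, ← smul_eq_mul, ← Real.sInf_smul_of_nonneg (hB0 y hy)]
    refine csInf_le_csInf hC hA.smul_set ?_
    rintro _ ⟨x, hx, rfl⟩
    show y * x ∈ C
    rw [mul_comm]
    exact h x hx y hy
  rw [← smul_eq_mul, ← Real.sInf_smul_of_nonneg (Real.sInf_nonneg hA0)]
  refine le_csInf hB.smul_set ?_
  rintro _ ⟨y, hy, rfl⟩
  exact hAy y hy

section Perp

variable {γ : Type*} (K : SimpleGraph γ)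

lemma perp_anti {S T : Set γ} (h : S ⊆ T) : perp K T ⊆ perp K S :=
  fun _ hv s hs => hv s (h hs)

lemma subset_perp_perp (S : Set γ) : S ⊆ perp K (perp K S) :=
  fun _ hv _ hs => (hs _ hv).symm

lemma perp_perp_perp (S : Set γ) : perp K (perp K (perp K S)) = perp K S :=
  (perp_anti K (subset_perp_perp K S)).antisymm (subset_perp_perp K _)

lemma isFlat_perp_perp (S : Set γ) : IsFlat K (perp K (perp K S)) :=
  perp_perp_perp K (perp K S)

lemma perp_perp_subset_perp {S T : Set γ} (h : S ⊆ perp K T) :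
    perp K (perp K S) ⊆ perp K T := by
  rw [← perp_perp_perp K T]
  exact perp_anti K (perp_anti K h)

end Perp

namespace SimpleGraph

variable {α β γ : Type*} {G : SimpleGraph α} {H : SimpleGraph β} {K : SimpleGraph γ} {n : ℕ}

lemma IsClique.injOn_hom (f : G →g K) {s : Set α} (hs : G.IsClique s) : Set.InjOn f s :=
  fun _ hx _ hy hxy => by_contra fun hne => (f.map_rel (hs hx hy hne)).ne hxy

lemma IsNClique.image_hom [DecidableEq γ] (f : G →g K) {s : Finset α} (hs : G.IsNClique n s) :
    K.IsNClique n (s.image f) := by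
  refine ⟨?_, ?_⟩
  · rw [Finset.coe_image]
    rintro _ ⟨x, hx, rfl⟩ _ ⟨y, hy, rfl⟩ hne
    exact f.map_rel (hs.isClique hx hy fun h => hne (h ▸ rfl))
  · rw [Finset.card_image_of_injOn (hs.isClique.injOn_hom f), hs.card_eq]

lemma IsNClique.product_disjProd {d e : ℕ} {s : Finset α} {t : Finset β}
    (hs : G.IsNClique d s) (ht : H.IsNClique e t) : (disjProd G H).IsNClique (d * e) (s ×ˢ t) := by
  refine ⟨?_, by rw [Finset.card_product, hs.card_eq, ht.card_eq]⟩
  rintro ⟨a, b⟩ hab ⟨a', b'⟩ hab' hne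
  rw [Finset.mem_coe, Finset.mem_product] at hab hab'
  by_cases haa : a = a'
  · subst haa
    exact Or.inr (ht.isClique hab.2 hab'.2 fun h => hne (Prod.ext rfl h))
  · exact Or.inl (hs.isClique hab.1 hab'.1 haa)

lemma IsNClique.induce_subtype {S : Set γ} [DecidablePred (· ∈ S)] {t : Finset γ}
    (ht : K.IsNClique n t) (htS : (t : Set γ) ⊆ S) :
    (K.induce S).IsNClique n (t.subtype (· ∈ S)) := by
  rw [isNClique_induce_iff, Finset.subtype_map_of_mem fun _ hx => htS hx]
  exact ht

lemma exists_isNClique_induce_iff {S : Set γ} :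
    (∃ t : Finset S, (K.induce S).IsNClique n t) ↔
      ∃ t : Finset γ, (t : Set γ) ⊆ S ∧ K.IsNClique n t := by
  classical
  constructor
  · rintro ⟨t, ht⟩
    exact ⟨_, Finset.map_subtype_subset t, (isNClique_induce_iff _ _ _).1 ht⟩
  · rintro ⟨t, htS, ht⟩
    exact ⟨_, ht.induce_subtype htS⟩

end SimpleGraph

section Homs

variable {α β γ δ : Type*} {G : SimpleGraph α} {H : SimpleGraph β}
  {K : SimpleGraph γ} {L : SimpleGraph δ} {d e : ℕ}

lemma graphJoin_top : graphJoin (⊤ : SimpleGraph α) (⊤ : SimpleGraph β) = ⊤ := by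
  ext (a | b) (a' | b') <;> simp [graphJoin]

lemma lexProd_le_disjProd (G : SimpleGraph α) (H : SimpleGraph β) : lexProd G H ≤ disjProd G H :=
  fun _ _ h => h.imp id And.right

def graphJoinMap (f : G →g K) (g : H →g L) : graphJoin G H →g graphJoin K L where
  toFun := Sum.map f g
  map_rel' {x y} h := by
    rcases x with a | b <;> rcases y with a' | b'
    exacts [f.map_rel h, trivial, trivial, g.map_rel h]

def disjProdMap (f : G →g K) (g : H →g L) : disjProd G H →g disjProd K L where
  toFun := Prod.map f g
  map_rel' h := h.imp f.map_rel g.map_rel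

def lexProdFiber (G : SimpleGraph α) (a : α) : H →g lexProd G H where
  toFun b := (a, b)
  map_rel' h := Or.inr ⟨rfl, h⟩

/-- Disjointness of adjacent `d`-cliques is automatic, and they differ as soon as `d ≠ 0`. -/
lemma fracGraph_adj_iff {S T : {S : Finset γ // S.card = d ∧ K.IsClique (S : Set γ)}} :
    (fracGraph K d).Adj S T ↔ 0 < d ∧ ∀ a ∈ S.1, ∀ b ∈ T.1, K.Adj a b := by
  constructor
  · rintro ⟨hne, -, hadj⟩
    refine ⟨Nat.pos_of_ne_zero fun hd => hne (Subtype.ext ?_), hadj⟩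
    rw [Finset.card_eq_zero.1 (S.2.1.trans hd), Finset.card_eq_zero.1 (T.2.1.trans hd)]
  · rintro ⟨hd, hadj⟩
    obtain ⟨x, hx⟩ := Finset.card_pos.1 (S.2.1 ▸ hd)
    have hST : Disjoint S.1 T.1 := Finset.disjoint_left.2 fun a ha hb => K.irrefl (hadj a ha a hb)
    exact ⟨fun h => Finset.disjoint_left.1 hST hx (h ▸ hx), hST, hadj⟩

def fracGraphHomOfCliques (C : α → Finset γ) (hC : ∀ a, K.IsNClique d (C a)) (hd : 0 < d)
    (hadj : ∀ a b, G.Adj a b → ∀ x ∈ C a, ∀ y ∈ C b, K.Adj x y) : G →g fracGraph K d where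
  toFun a := ⟨C a, (hC a).card_eq, (hC a).isClique⟩
  map_rel' h := fracGraph_adj_iff.2 ⟨hd, hadj _ _ h⟩

def singletonFracGraphHom (K : SimpleGraph γ) : K →g fracGraph K 1 :=
  fracGraphHomOfCliques (fun a => {a}) (fun a => isNClique_singleton.2 rfl) one_pos
    fun _ _ h _ hx _ hy => by rwa [Finset.mem_singleton.1 hx, Finset.mem_singleton.1 hy]

open Classical in
noncomputable def fracGraphMap (f : K →g L) (d : ℕ) : fracGraph K d →g fracGraph L d where
  toFun S :=
    have hS : K.IsNClique d S.1 := ⟨S.2.2, S.2.1⟩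
    ⟨S.1.image f, (hS.image_hom f).card_eq, (hS.image_hom f).isClique⟩
  map_rel' h := by
    obtain ⟨hd, hadj⟩ := fracGraph_adj_iff.1 h
    refine fracGraph_adj_iff.2 ⟨hd, ?_⟩
    simp only [Finset.mem_image]
    rintro _ ⟨x, hx, rfl⟩ _ ⟨y, hy, rfl⟩
    exact f.map_rel (hadj x hx y hy)

open Classical in
noncomputable def fracGraphInduceHom (ψ : G →g fracGraph K d) {S : Set γ}
    (hS : ∀ a, ((ψ a).1 : Set γ) ⊆ S) : G →g fracGraph (K.induce S) d where
  toFun a :=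
    have h := (⟨(ψ a).2.2, (ψ a).2.1⟩ : K.IsNClique d (ψ a).1).induce_subtype (hS a)
    ⟨_, h.card_eq, h.isClique⟩
  map_rel' h := by
    obtain ⟨hd, hadj⟩ := fracGraph_adj_iff.1 (ψ.map_rel h)
    exact fracGraph_adj_iff.2 ⟨hd, fun x hx y hy =>
      hadj x (Finset.mem_subtype.1 hx) y (Finset.mem_subtype.1 hy)⟩

def fracGraphDisjProd (hd : 0 < d) (he : 0 < e) :
    disjProd (fracGraph K d) (fracGraph L e) →g fracGraph (disjProd K L) (d * e) :=
  fracGraphHomOfCliques (fun p => p.1.1 ×ˢ p.2.1)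
    (fun p => IsNClique.product_disjProd ⟨p.1.2.2, p.1.2.1⟩ ⟨p.2.2.2, p.2.2.1⟩)
    (Nat.mul_pos hd he) fun p q hpq x hx y hy => by
      rw [Finset.mem_product] at hx hy
      exact hpq.imp (fun h => (fracGraph_adj_iff.1 h).2 _ hx.1 _ hy.1)
        (fun h => (fracGraph_adj_iff.1 h).2 _ hx.2 _ hy.2)

theorem nonempty_hom_fracGraph_of_orthogonal {S : α → Set γ} {m : ℕ} (hm : 0 < m)
    (hS : ∀ a, ∃ t : Finset γ, (t : Set γ) ⊆ S a ∧ K.IsClique (t : Set γ) ∧ m ≤ t.card)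
    (horth : ∀ a b, G.Adj a b → S b ⊆ perp K (S a)) : Nonempty (G →g fracGraph K m) := by
  have hC : ∀ a, ∃ t : Finset γ, (t : Set γ) ⊆ S a ∧ K.IsNClique m t := by
    intro a
    obtain ⟨t, htS, ht, hmt⟩ := hS a
    obtain ⟨u, hut, hu⟩ := Finset.exists_subset_card_eq hmt
    exact ⟨u, (Finset.coe_subset.2 hut).trans htS, ht.subset (Finset.coe_subset.2 hut), hu⟩
  choose C hCS hC using hC
  exact ⟨fracGraphHomOfCliques C hC hm fun a b hab x hx y hy =>
    (horth a b hab (hCS b hy) x (hCS a hx)).symm⟩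

end Homs

namespace SemiringFamily

variable (F : SemiringFamily.{u})

theorem nonempty_completeGraph_hom (N : ℕ) : Nonempty (completeGraph (Fin N) →g F.F N) := by
  induction N with
  | zero => exact ⟨⟨isEmptyElim, fun {a} => isEmptyElim a⟩⟩
  | succ N ih =>
    obtain ⟨f⟩ := ih
    obtain ⟨j⟩ := F.add_hom N 1
    obtain ⟨v⟩ := F.nonempty_one
    let one : completeGraph (Fin 1) →g F.F 1 :=
      ⟨fun _ => v, fun h => (h.ne (Subsingleton.elim _ _)).elim⟩
    exact ⟨j.comp <| (graphJoinMap f one).comp <| (Hom.ofLE graphJoin_top.ge).comp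
      (Iso.completeGraph finSumFinEquiv.symm).toHom⟩

def fracRatios {α : Type*} (G : SimpleGraph α) : Set ℝ :=
  {x | ∃ n d : ℕ, 1 ≤ d ∧ Nonempty (G →g fracGraph (F.F n) d) ∧ x = (n : ℝ) / d}

variable {α β : Type*} (G : SimpleGraph α) (H : SimpleGraph β)

lemma fracRatios_nonneg : ∀ x ∈ F.fracRatios G, 0 ≤ x := by
  rintro _ ⟨n, d, -, -, rfl⟩
  positivity

lemma bddBelow_fracRatios : BddBelow (F.fracRatios G) :=
  ⟨0, F.fracRatios_nonneg G⟩

lemma fracRatios_nonempty [Finite α] : (F.fracRatios G).Nonempty := by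
  obtain ⟨κ⟩ := F.nonempty_completeGraph_hom (Nat.card α)
  let e : G →g completeGraph (Fin (Nat.card α)) :=
    (Iso.completeGraph (Finite.equivFin α)).toHom.comp (Hom.ofLE le_top)
  exact ⟨_, Nat.card α, 1, le_rfl, ⟨(singletonFracGraphHom _).comp (κ.comp e)⟩, rfl⟩

lemma mul_mem_fracRatios_disjProd {x y : ℝ} (hx : x ∈ F.fracRatios G) (hy : y ∈ F.fracRatios H) :
    x * y ∈ F.fracRatios (disjProd G H) := by
  obtain ⟨n, d, hd, ⟨φ⟩, rfl⟩ := hx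
  obtain ⟨m, e, he, ⟨ψ⟩, rfl⟩ := hy
  obtain ⟨μ⟩ := F.mul_hom n m
  refine ⟨n * m, d * e, Nat.mul_pos hd he,
    ⟨(fracGraphMap μ _).comp ((fracGraphDisjProd hd he).comp (disjProdMap φ ψ))⟩, ?_⟩
  push_cast
  exact div_mul_div_comm _ _ _ _

end SemiringFamily

section EtaFrac

open SemiringFamily

variable (F : SemiringFamily.{u}) {α β : Type*} (G : SimpleGraph α) (H : SimpleGraph β)

lemma etaFrac_eq_sInf_fracRatios : etaFrac F G = sInf (F.fracRatios G) := rfl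

lemma etaFrac_nonneg : 0 ≤ etaFrac F G :=
  (etaFrac_eq_sInf_fracRatios F G).symm ▸ Real.sInf_nonneg (F.fracRatios_nonneg G)

variable {F G H} in
lemma etaFrac_le_of_mem {x : ℝ} (hx : x ∈ F.fracRatios G) : etaFrac F G ≤ x :=
  (etaFrac_eq_sInf_fracRatios F G).symm ▸ csInf_le (F.bddBelow_fracRatios G) hx

lemma etaFrac_of_isEmpty [IsEmpty α] : etaFrac F G = 0 :=
  (etaFrac_le_of_mem ⟨0, 1, le_rfl, ⟨⟨isEmptyElim, fun {a} => isEmptyElim a⟩⟩, by simp⟩).antisymm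
    (etaFrac_nonneg F G)

lemma etaFrac_le_of_hom [Finite β] (f : G →g H) : etaFrac F G ≤ etaFrac F H := by
  rw [etaFrac_eq_sInf_fracRatios, etaFrac_eq_sInf_fracRatios]
  refine csInf_le_csInf (F.bddBelow_fracRatios G) (F.fracRatios_nonempty H) ?_
  rintro _ ⟨n, d, hd, ⟨φ⟩, rfl⟩
  exact ⟨n, d, hd, ⟨φ.comp f⟩, rfl⟩

lemma etaFrac_disjProd_le [Finite α] [Finite β] :
    etaFrac F (disjProd G H) ≤ etaFrac F G * etaFrac F H := by
  simp only [etaFrac_eq_sInf_fracRatios]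
  exact Real.sInf_le_sInf_mul_sInf (F.fracRatios_nonempty G) (F.fracRatios_nonempty H)
    (F.fracRatios_nonneg G) (F.fracRatios_nonneg H) (F.bddBelow_fracRatios _)
    fun _ hx _ hy => F.mul_mem_fracRatios_disjProd G H hx hy

end EtaFrac

namespace LinearLikeFamily

open SemiringFamily

variable (F : LinearLikeFamily.{u})

theorem exists_cliqueFreeOn_of_isFlat {n : ℕ} {S : Set (F.V n)} (hS : IsFlat (F.F n) S) :
    ∃ k, (∃ t : Finset (F.V n), (t : Set (F.V n)) ⊆ S ∧ (F.F n).IsNClique k t) ∧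
      (F.F n).CliqueFreeOn S (k + 1) ∧ Nonempty ((F.F n).induce S →g F.F k) := by
  obtain ⟨k, hk, hfree, hhom, -⟩ := F.linearLike n S hS
  exact ⟨k, exists_isNClique_induce_iff.1 hk, (cliqueFree_induce_iff _ _ _).1 hfree, hhom⟩

variable {α β : Type*} {G : SimpleGraph α} {H : SimpleGraph β}

theorem exists_mem_fracRatios_of_hom_lexProd [Nonempty α] [Nonempty β] {n d : ℕ}
    (φ : lexProd G H →g fracGraph (F.F n) d) (hd : 0 < d) :
    ∃ m : ℕ, 0 < m ∧ (n : ℝ) / m ∈ F.fracRatios G ∧ (m : ℝ) / d ∈ F.fracRatios H := by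
  set K := F.F n
  let T : α → Set (F.V n) := fun a => ⋃ b, ((φ (a, b)).1 : Set (F.V n))
  have hφT : ∀ a b, ((φ (a, b)).1 : Set (F.V n)) ⊆ T a :=
    fun a b => Set.subset_iUnion (fun b => ((φ (a, b)).1 : Set (F.V n))) b
  have horth : ∀ a a', G.Adj a a' → T a' ⊆ perp K (T a) := by
    intro a a' h x hx y hy
    obtain ⟨b', hx⟩ := Set.mem_iUnion.1 hx
    obtain ⟨b, hy⟩ := Set.mem_iUnion.1 hy
    have hadj : (lexProd G H).Adj (a, b) (a', b') := Or.inl h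
    exact ((fracGraph_adj_iff.1 (φ.map_rel hadj)).2 y hy x hx).symm
  choose k hclique hfree hhom using
    fun a => F.exists_cliqueFreeOn_of_isFlat (isFlat_perp_perp K (T a))
  let a₀ := Function.argmin k
  obtain ⟨b₀⟩ := ‹Nonempty β›
  have hφS : ∀ b, ((φ (a₀, b)).1 : Set (F.V n)) ⊆ perp K (perp K (T a₀)) :=
    fun b => (hφT a₀ b).trans (subset_perp_perp K _)
  have hdk : d ≤ k a₀ := by
    by_contra! hlt
    exact (hfree a₀).mono _ hlt (hφS b₀) ⟨(φ (a₀, b₀)).2.2, (φ (a₀, b₀)).2.1⟩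
  have hm : 0 < k a₀ := hd.trans_le hdk
  have hG : Nonempty (G →g fracGraph K (k a₀)) := by
    refine nonempty_hom_fracGraph_of_orthogonal (S := fun a => perp K (perp K (T a))) hm
      (fun a => ?_) fun a a' h => ?_
    · obtain ⟨t, htS, ht⟩ := hclique a
      exact ⟨t, htS, ht.isClique, ht.card_eq ▸ Function.argmin_le k a⟩
    · rw [perp_perp_perp]
      exact perp_perp_subset_perp K (horth a a' h)
  obtain ⟨f⟩ := hhom a₀
  exact ⟨k a₀, hm, ⟨n, k a₀, hm, hG, rfl⟩,
    ⟨k a₀, d, hd, ⟨(fracGraphMap f d).comp (fracGraphInduceHom (φ.comp (lexProdFiber G a₀)) hφS)⟩,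
      rfl⟩⟩

theorem etaFrac_mul_le_of_hom_lexProd [Nonempty α] [Nonempty β] {n d : ℕ}
    (φ : lexProd G H →g fracGraph (F.F n) d) (hd : 0 < d) :
    etaFrac F.toSemiringFamily G * etaFrac F.toSemiringFamily H ≤ n / d := by
  obtain ⟨m, hm, hG, hH⟩ := F.exists_mem_fracRatios_of_hom_lexProd φ hd
  calc etaFrac F.toSemiringFamily G * etaFrac F.toSemiringFamily H
      ≤ (n / m) * (m / d) :=
        mul_le_mul (etaFrac_le_of_mem hG) (etaFrac_le_of_mem hH) (etaFrac_nonneg _ _)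
          (by positivity)
    _ = n / d := by field_simp

variable (G H)

theorem etaFrac_mul_le_etaFrac_lexProd [Finite α] [Finite β] :
    etaFrac F.toSemiringFamily G * etaFrac F.toSemiringFamily H
      ≤ etaFrac F.toSemiringFamily (lexProd G H) := by
  rcases isEmpty_or_nonempty α with hα | hα
  · rw [etaFrac_of_isEmpty _ G, zero_mul]
    exact etaFrac_nonneg _ _
  rcases isEmpty_or_nonempty β with hβ | hβ
  · rw [etaFrac_of_isEmpty _ H, mul_zero]
    exact etaFrac_nonneg _ _
  rw [etaFrac_eq_sInf_fracRatios _ (lexProd G H)]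
  refine le_csInf (F.fracRatios_nonempty _) ?_
  rintro _ ⟨n, d, hd, ⟨φ⟩, rfl⟩
  exact F.etaFrac_mul_le_of_hom_lexProd φ hd

end LinearLikeFamily

universe w

/-- For a linear-like semiring family, the fractional `F`-number is multiplicative
on lexicographic and on disjunctive products. -/
theorem linearLike_etaFrac_multiplicative (F : LinearLikeFamily.{u}) {α : Type v} {β : Type w}
    [Fintype α] [Fintype β] (G : SimpleGraph α) (H : SimpleGraph β) :
    etaFrac F.toSemiringFamily (lexProd G H)
        = etaFrac F.toSemiringFamily G * etaFrac F.toSemiringFamily H ∧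
      etaFrac F.toSemiringFamily (disjProd G H)
        = etaFrac F.toSemiringFamily G * etaFrac F.toSemiringFamily H := by
  have hlex := etaFrac_le_of_hom F.toSemiringFamily _ _ (Hom.ofLE (lexProd_le_disjProd G H))
  have hdisj := etaFrac_disjProd_le F.toSemiringFamily G H
  have hmul := F.etaFrac_mul_le_etaFrac_lexProd G H
  exact ⟨(hlex.trans hdisj).antisymm hmul, hdisj.antisymm (hmul.trans hlex)⟩
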